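/- (Compatibility of the spherical and weight-one spectral measures.) Let μ ∈ C³ with μ1+μ2+μ3 = 0, and suppose all tangents and cotangents below are defined (no coordinate difference μi − μj is an integer). With μ^{w4} = (μ3, μ1, μ2) and μ^{w5} = (μ2, μ3, μ1), one has (1/6) Σ_{ν ∈ {μ, μ^{w4}, μ^{w5}}} tan((π/2)(ν1 − ν3)) tan((π/2)(ν2 − ν3)) · spec¹(ν) = − spec⁰(μ). -/
import Mathlib


/-- `spec⁰(μ) = (1/384π⁴) Π_{i<j} (μi−μj) tan((π/2)(μi−μj))`. -/
noncomputable def spec0 (μ1 μ2 μ3 : ℂ) : ℂ :=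
  (1 / (384 * (Real.pi : ℂ) ^ 4)) *
    ((μ1 - μ2) * Complex.tan ((Real.pi : ℂ) / 2 * (μ1 - μ2)) *
      ((μ1 - μ3) * Complex.tan ((Real.pi : ℂ) / 2 * (μ1 - μ3))) *
      ((μ2 - μ3) * Complex.tan ((Real.pi : ℂ) / 2 * (μ2 - μ3))))

/-- `spec¹(μ) = (1/64π⁴) (Π_{i<j} (μi−μj)) cot((π/2)(μ1−μ3)) cot((π/2)(μ2−μ3)) tan((π/2)(μ1−μ2))`. -/
noncomputable def spec1 (μ1 μ2 μ3 : ℂ) : ℂ :=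
  (1 / (64 * (Real.pi : ℂ) ^ 4)) *
    ((μ1 - μ2) * (μ1 - μ3) * (μ2 - μ3)) *
    Complex.cot ((Real.pi : ℂ) / 2 * (μ1 - μ3)) *
    Complex.cot ((Real.pi : ℂ) / 2 * (μ2 - μ3)) *
    Complex.tan ((Real.pi : ℂ) / 2 * (μ1 - μ2))

lemma aux_sin_ne (z : ℂ) (hz : ∀ k : ℤ, z ≠ (k : ℂ)) :
    Complex.sin ((Real.pi : ℂ) / 2 * z) ≠ 0 := by
  have hπ : (Real.pi : ℂ) ≠ 0 := Complex.ofReal_ne_zero.mpr Real.pi_ne_zero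
  intro h
  obtain ⟨k, hk⟩ := Complex.sin_eq_zero_iff.mp h
  have h2 : z * (Real.pi : ℂ) = (2 * (k : ℂ)) * (Real.pi : ℂ) := by linear_combination 2 * hk
  exact hz (2 * k) (by push_cast; exact mul_right_cancel₀ hπ h2)

lemma aux_cos_ne (z : ℂ) (hz : ∀ k : ℤ, z ≠ (k : ℂ)) :
    Complex.cos ((Real.pi : ℂ) / 2 * z) ≠ 0 := by
  have hπ : (Real.pi : ℂ) ≠ 0 := Complex.ofReal_ne_zero.mpr Real.pi_ne_zero
  intro h
  obtain ⟨k, hk⟩ := Complex.cos_eq_zero_iff.mp h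
  have h2 : z * (Real.pi : ℂ) = (2 * (k : ℂ) + 1) * (Real.pi : ℂ) := by linear_combination 2 * hk
  exact hz (2 * k + 1) (by push_cast; exact mul_right_cancel₀ hπ h2)


lemma aux_tan_cot (x : ℂ) (hs : Complex.sin x ≠ 0) (hc : Complex.cos x ≠ 0) :
    Complex.tan x * Complex.cot x = 1 := by
  rw [Complex.tan_eq_sin_div_cos, Complex.cot_eq_cos_div_sin]
  field_simp

lemma aux_core (a c : ℂ) (ca : Complex.cos a ≠ 0) (cc : Complex.cos c ≠ 0)
    (cb : Complex.cos (a + c) ≠ 0) :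
    Complex.tan a - Complex.tan (a + c) + Complex.tan c
      = -(Complex.tan a * Complex.tan (a + c) * Complex.tan c) := by
  rw [Complex.cos_add] at cb
  rw [Complex.tan_eq_sin_div_cos, Complex.tan_eq_sin_div_cos, Complex.tan_eq_sin_div_cos,
    Complex.sin_add, Complex.cos_add]
  field_simp
  ring

set_option maxHeartbeats 1000000 in
/-- Compatibility of the spherical and weight-one spectral measures: with
`μ^{w4} = (μ3,μ1,μ2)` and `μ^{w5} = (μ2,μ3,μ1)`,
`(1/6) Σ_{ν ∈ {μ, μ^{w4}, μ^{w5}}} tan((π/2)(ν1−ν3)) tan((π/2)(ν2−ν3)) spec¹(ν) = −spec⁰(μ)`. -/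
theorem spectral_measure_compatibility (μ1 μ2 μ3 : ℂ) (hμ : μ1 + μ2 + μ3 = 0)
    (h12 : ∀ k : ℤ, μ1 - μ2 ≠ (k : ℂ)) (h13 : ∀ k : ℤ, μ1 - μ3 ≠ (k : ℂ))
    (h23 : ∀ k : ℤ, μ2 - μ3 ≠ (k : ℂ)) :
    (1 / 6 : ℂ) *
      (Complex.tan ((Real.pi : ℂ) / 2 * (μ1 - μ3)) *
          Complex.tan ((Real.pi : ℂ) / 2 * (μ2 - μ3)) * spec1 μ1 μ2 μ3
        + Complex.tan ((Real.pi : ℂ) / 2 * (μ3 - μ2)) *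
            Complex.tan ((Real.pi : ℂ) / 2 * (μ1 - μ2)) * spec1 μ3 μ1 μ2
        + Complex.tan ((Real.pi : ℂ) / 2 * (μ2 - μ1)) *
            Complex.tan ((Real.pi : ℂ) / 2 * (μ3 - μ1)) * spec1 μ2 μ3 μ1)
      = -spec0 μ1 μ2 μ3 := by
  have hπ : (Real.pi : ℂ) ≠ 0 := Complex.ofReal_ne_zero.mpr Real.pi_ne_zero
  have cot_neg : ∀ x : ℂ, Complex.cot (-x) = -Complex.cot x := by
    intro x
    rw [Complex.cot_eq_cos_div_sin, Complex.cot_eq_cos_div_sin, Complex.sin_neg, Complex.cos_neg,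
      div_neg]
  set a : ℂ := (Real.pi : ℂ) / 2 * (μ1 - μ2) with ha
  set c : ℂ := (Real.pi : ℂ) / 2 * (μ2 - μ3) with hc
  have e13 : (Real.pi : ℂ) / 2 * (μ1 - μ3) = a + c := by rw [ha, hc]; ring
  have e32 : (Real.pi : ℂ) / 2 * (μ3 - μ2) = -c := by rw [hc]; ring
  have e31 : (Real.pi : ℂ) / 2 * (μ3 - μ1) = -(a + c) := by rw [ha, hc]; ring
  have e21 : (Real.pi : ℂ) / 2 * (μ2 - μ1) = -a := by rw [ha]; ring
  have sa : Complex.sin a ≠ 0 := aux_sin_ne _ h12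
  have ca : Complex.cos a ≠ 0 := aux_cos_ne _ h12
  have sc : Complex.sin c ≠ 0 := aux_sin_ne _ h23
  have cc : Complex.cos c ≠ 0 := aux_cos_ne _ h23
  have sb : Complex.sin (a + c) ≠ 0 := by rw [← e13]; exact aux_sin_ne _ h13
  have cb : Complex.cos (a + c) ≠ 0 := by rw [← e13]; exact aux_cos_ne _ h13
  have tka : Complex.tan a * Complex.cot a = 1 := aux_tan_cot a sa ca
  have tkb : Complex.tan (a + c) * Complex.cot (a + c) = 1 := aux_tan_cot (a + c) sb cb
  have tkc : Complex.tan c * Complex.cot c = 1 := aux_tan_cot c sc cc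
  have core : Complex.tan a - Complex.tan (a + c) + Complex.tan c
      = -(Complex.tan a * Complex.tan (a + c) * Complex.tan c) := aux_core a c ca cc cb
  simp only [spec0, spec1, e13, e32, e31, e21, Complex.tan_neg, cot_neg]
  set Ta := Complex.tan a
  set Tb := Complex.tan (a + c)
  set Tc := Complex.tan c
  set Ka := Complex.cot a
  set Kb := Complex.cot (a + c)
  set Kc := Complex.cot c
  linear_combination ((μ1 - μ2) * (μ1 - μ3) * (μ2 - μ3) / (384 * (Real.pi : ℂ) ^ 4)) *
    ((Ta * Tb * Kb - Ta * Tb * Ka) * tkc + (Ta + Tc * Ta * Ka) * tkb + (Tc - Tb) * tka + core)
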